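/- Let μ be a finite positive Borel measure on the unit circle T with infinite support, K_n its Christoffel kernel, w ∈ T, and ζ_{0n}, …, ζ_{nn} ∈ T the zeros of B_{n+1}(w,·). The fundamental polynomials ℓ_{jn}(z) := K_n(z, ζ_{jn}) / K_n(ζ_{jn}, ζ_{jn}) satisfy Σ_{j=0}^n ∫_T |ℓ_{jn}|² dμ = μ(T). -/

import Mathlib

open MeasureTheory Polynomial Filter
open scoped ComplexConjugate Topology

/-- The Christoffel kernel `K_n(w,z) = ∑_{j=0}^n conj(φ_j(w)) φ_j(z)`. -/
noncomputable def christoffelK (φ : ℕ → Polynomial ℂ) (n : ℕ) (w z : ℂ) : ℂ :=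
  ∑ j ∈ Finset.range (n + 1), conj ((φ j).eval w) * (φ j).eval z

/-- The para-orthogonal polynomial `B_{n+1}(w,z) = (1 − conj(w) z) K_n(w,z)`. -/
noncomputable def paraOrtho (φ : ℕ → Polynomial ℂ) (n : ℕ) (w z : ℂ) : ℂ :=
  (1 - conj w * z) * christoffelK φ n w z

/-- The `j`-th fundamental (Lagrange) polynomial for the nodes `ζ`:
`ℓ_{jn}(z) = K_n(z, ζ_{jn}) / K_n(ζ_{jn}, ζ_{jn})`.  Note that by Hermitian symmetry of the
kernel, `K_n(z, ζ) = conj (K_n(ζ, z))`; as a *polynomial* in `z` (of degree `n`, as in the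
paper) the fundamental polynomial is `z ↦ K_n(ζ_{jn}, z) / K_n(ζ_{jn}, ζ_{jn})`, with
`K_n(ζ_{jn}, ζ_{jn}) = ∑_k |φ_k(ζ_{jn})|²` a positive real number. -/
noncomputable def ellFun (φ : ℕ → Polynomial ℂ) (n : ℕ) (ζ : Fin (n + 1) → ℂ)
    (j : Fin (n + 1)) (z : ℂ) : ℂ :=
  christoffelK φ n (ζ j) z / christoffelK φ n (ζ j) (ζ j)

/-!
Put `λ_j = 1 / K_n(ζ_j, ζ_j)`. The reproducing property of `K_n` on polynomials of degree `≤ n`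
gives `∫ |ℓ_j|² dμ = λ_j` and `∫ ℓ_j dμ = λ_j`, so it suffices that `∑_j ℓ_j = 1`, which by
Lagrange interpolation at the `n + 1` nodes amounts to `K_n(ζ_j, ζ_i) = 0` for `i ≠ j`.
For this, `q = B_{n+1}(w, ·) / (z - ζ_j)` has degree `≤ n` and, since `|z| = |ζ_j| = 1` on the
support of `μ`, is orthogonal to every polynomial of degree `≤ n` vanishing at `ζ_j`.
Hence `q` is a nonzero multiple of `K_n(ζ_j, ·)`, and it vanishes at the other nodes.
-/

theorem Continuous.integrable_of_measure_compl_eq_zero {X E : Type*} [TopologicalSpace X]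
    [T2Space X] [MeasurableSpace X] [OpensMeasurableSpace X] [NormedAddCommGroup E]
    {μ : Measure X} [IsFiniteMeasure μ] {K : Set X} (hK : IsCompact K) (hμK : μ Kᶜ = 0)
    {f : X → E} (hf : Continuous f) : Integrable f μ := by
  rw [← Measure.restrict_eq_self_of_ae_mem (ae_iff.mpr hμK)]
  exact hf.continuousOn.integrableOn_compact hK

theorem ofReal_integral_norm_sq {X : Type*} [MeasurableSpace X] (μ : Measure X) (f : X → ℂ) :
    ((∫ x, ‖f x‖ ^ 2 ∂μ : ℝ) : ℂ) = ∫ x, f x * conj (f x) ∂μ := by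
  simp_rw [Complex.mul_conj']
  exact_mod_cast (integral_ofReal (𝕜 := ℂ)).symm

section Christoffel

variable {μ : Measure ℂ} [IsFiniteMeasure μ] {φ : ℕ → ℂ[X]} {n : ℕ}

noncomputable def christoffelPoly (φ : ℕ → ℂ[X]) (n : ℕ) (a : ℂ) : ℂ[X] :=
  ∑ j ∈ Finset.range (n + 1), conj ((φ j).eval a) • φ j

@[simp]
theorem eval_christoffelPoly (a z : ℂ) :
    (christoffelPoly φ n a).eval z = christoffelK φ n a z := by
  simp [christoffelPoly, christoffelK, eval_finsetSum]

theorem christoffelPoly_mem_degreeLE (hdeg : ∀ k, (φ k).degree = k) (a : ℂ) :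
    christoffelPoly φ n a ∈ degreeLE ℂ n :=
  Submodule.sum_mem _ fun j hj => Submodule.smul_mem _ _ <| mem_degreeLE.mpr <| by
    rw [hdeg j]
    exact_mod_cast Finset.mem_range_succ_iff.mp hj

theorem christoffelK_self (a : ℂ) :
    christoffelK φ n a a = ((∑ j ∈ Finset.range (n + 1), ‖(φ j).eval a‖ ^ 2 : ℝ) : ℂ) := by
  push_cast
  exact Finset.sum_congr rfl fun j _ => by rw [mul_comm, Complex.mul_conj']

theorem conj_christoffelK_self (a : ℂ) : conj (christoffelK φ n a a) = christoffelK φ n a a := by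
  rw [christoffelK_self, Complex.conj_ofReal]

theorem christoffelK_self_ne_zero (h0 : (φ 0).degree = 0) (a : ℂ) :
    christoffelK φ n a a ≠ 0 := by
  have hφ0 : (φ 0).eval a ≠ 0 := by
    rw [eq_C_of_degree_eq_zero h0, eval_C]
    exact coeff_ne_zero_of_eq_degree h0
  rw [christoffelK_self, Complex.ofReal_ne_zero]
  exact (Finset.sum_pos' (fun j _ => by positivity) ⟨0, by simp, by positivity⟩).ne'

theorem sum_smul_christoffelPoly_eq_one (hdeg : ∀ k, (φ k).degree = k)
    {ζ : Fin (n + 1) → ℂ} (hζinj : Function.Injective ζ)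
    (hoff : ∀ i j, i ≠ j → christoffelK φ n (ζ j) (ζ i) = 0) :
    ∑ j, (christoffelK φ n (ζ j) (ζ j))⁻¹ • christoffelPoly φ n (ζ j) = 1 := by
  refine eq_of_degrees_lt_of_eval_index_eq Finset.univ hζinj.injOn ?_ ?_ fun i _ => ?_
  · rw [Finset.card_univ, Fintype.card_fin, ← mem_degreeLT, degreeLT_succ_eq_degreeLE]
    exact Submodule.sum_mem _ fun j _ =>
      Submodule.smul_mem _ _ (christoffelPoly_mem_degreeLE hdeg _)
  · rw [Finset.card_univ, Fintype.card_fin]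
    exact degree_one_le.trans_lt (by exact_mod_cast n.succ_pos)
  · rw [eval_finsetSum, Finset.sum_eq_single i (fun j _ hji => by simp [hoff i j hji.symm])
      (by simp), eval_smul, eval_christoffelPoly, smul_eq_mul,
      inv_mul_cancel₀ (christoffelK_self_ne_zero (hdeg 0) _), eval_one]

theorem integrable_eval_mul_conj_eval (hμT : μ (Metric.sphere (0 : ℂ) 1)ᶜ = 0) (p q : ℂ[X]) :
    Integrable (fun z => p.eval z * conj (q.eval z)) μ :=
  (by fun_prop : Continuous _).integrable_of_measure_compl_eq_zero (isCompact_sphere 0 1) hμT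

theorem integral_christoffelPoly_mul_conj (hμT : μ (Metric.sphere (0 : ℂ) 1)ᶜ = 0)
    (hdeg : ∀ k, (φ k).degree = k)
    (horth : ∀ k m, ∫ z, (φ k).eval z * conj ((φ m).eval z) ∂μ = if k = m then 1 else 0)
    (a : ℂ) {p : ℂ[X]} (hp : p ∈ degreeLE ℂ n) :
    ∫ z, (christoffelPoly φ n a).eval z * conj (p.eval z) ∂μ = conj (p.eval a) := by
  let S : Polynomial.Sequence ℂ := ⟨φ, hdeg⟩
  rw [← S.span_degreeLE fun i _ => (leadingCoeff_ne_zero.mpr (S.ne_zero i)).isUnit] at hp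
  induction hp using Submodule.span_induction with
  | mem p hp =>
    obtain ⟨k, hk, rfl⟩ := hp
    change ∫ z, _ * conj ((φ k).eval z) ∂μ = conj ((φ k).eval a)
    simp_rw [eval_christoffelPoly, christoffelK, Finset.sum_mul, mul_assoc]
    rw [integral_finsetSum _ fun j _ => (integrable_eval_mul_conj_eval hμT _ _).const_mul _]
    simp_rw [integral_const_mul, horth, mul_ite, mul_one, mul_zero]
    rw [Finset.sum_ite_eq' _ _ _, if_pos (Finset.mem_range_succ_iff.mpr hk)]
  | zero => simp
  | add p q _ _ hp hq =>
    simp_rw [eval_add, map_add, mul_add]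
    rw [integral_add (integrable_eval_mul_conj_eval hμT _ _)
      (integrable_eval_mul_conj_eval hμT _ _), hp, hq]
  | smul c p _ hp =>
    simp_rw [eval_smul, smul_eq_mul, map_mul, mul_left_comm _ (conj c)]
    rw [integral_const_mul, hp]


theorem eq_zero_of_integral_mul_conj_eq_zero (hμT : μ (Metric.sphere (0 : ℂ) 1)ᶜ = 0)
    (hμinf : ∀ s : Finset ℂ, μ ((s : Set ℂ)ᶜ) ≠ 0) {p : ℂ[X]}
    (hp : ∫ z, p.eval z * conj (p.eval z) ∂μ = 0) : p = 0 := by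
  by_contra hp0
  have hnorm : (fun z => ‖p.eval z‖ ^ 2) =ᵐ[μ] 0 := by
    refine (integral_eq_zero_iff_of_nonneg (fun z => by positivity)
      ((by fun_prop : Continuous _).integrable_of_measure_compl_eq_zero
        (isCompact_sphere 0 1) hμT)).mp ?_
    exact_mod_cast (ofReal_integral_norm_sq μ _).trans hp
  refine hμinf p.roots.toFinset (measure_mono_null (fun z hz => ?_) (ae_iff.mp hnorm))
  simpa [mem_roots hp0] using hz

theorem eq_smul_christoffelPoly_of_orthogonal (hμT : μ (Metric.sphere (0 : ℂ) 1)ᶜ = 0)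
    (hμinf : ∀ s : Finset ℂ, μ ((s : Set ℂ)ᶜ) ≠ 0) (hdeg : ∀ k, (φ k).degree = k)
    (horth : ∀ k m, ∫ z, (φ k).eval z * conj ((φ m).eval z) ∂μ = if k = m then 1 else 0)
    {a : ℂ} {q : ℂ[X]} (hq : q ∈ degreeLE ℂ n)
    (hq_orth : ∀ p ∈ degreeLE ℂ n, p.eval a = 0 → ∫ z, q.eval z * conj (p.eval z) ∂μ = 0) :
    q = (q.eval a / christoffelK φ n a a) • christoffelPoly φ n a := by
  set c := q.eval a / christoffelK φ n a a
  set g := q - c • christoffelPoly φ n a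
  have hg : g ∈ degreeLE ℂ n :=
    Submodule.sub_mem _ hq (Submodule.smul_mem _ _ (christoffelPoly_mem_degreeLE hdeg a))
  have hga : g.eval a = 0 := by
    simp [g, c, div_mul_cancel₀ _ (christoffelK_self_ne_zero (n := n) (hdeg 0) a)]
  have hgg : ∫ z, g.eval z * conj (g.eval z) ∂μ = 0 := by
    have hsplit : (fun z => g.eval z * conj (g.eval z)) = fun z =>
        q.eval z * conj (g.eval z) - c * ((christoffelPoly φ n a).eval z * conj (g.eval z)) := by
      funext z
      simp only [g, eval_sub, eval_smul, smul_eq_mul]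
      ring
    rw [hsplit, integral_sub (integrable_eval_mul_conj_eval hμT _ _)
      ((integrable_eval_mul_conj_eval hμT _ _).const_mul _), integral_const_mul,
      hq_orth g hg hga, integral_christoffelPoly_mul_conj hμT hdeg horth a hg, hga]
    simp
  exact sub_eq_zero.mp (eq_zero_of_integral_mul_conj_eq_zero hμT hμinf hgg)

theorem integral_eval_christoffelPoly (hμT : μ (Metric.sphere (0 : ℂ) 1)ᶜ = 0)
    (hdeg : ∀ k, (φ k).degree = k)
    (horth : ∀ k m, ∫ z, (φ k).eval z * conj ((φ m).eval z) ∂μ = if k = m then 1 else 0)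
    (a : ℂ) : ∫ z, (christoffelPoly φ n a).eval z ∂μ = 1 := by
  simpa using integral_christoffelPoly_mul_conj hμT hdeg horth a (p := 1)
    (mem_degreeLE.mpr (degree_one_le.trans (WithBot.coe_le_coe.mpr n.zero_le)))

theorem ofReal_integral_norm_sq_christoffelK_div (hμT : μ (Metric.sphere (0 : ℂ) 1)ᶜ = 0)
    (hdeg : ∀ k, (φ k).degree = k)
    (horth : ∀ k m, ∫ z, (φ k).eval z * conj ((φ m).eval z) ∂μ = if k = m then 1 else 0)
    (a : ℂ) :
    ((∫ z, ‖christoffelK φ n a z / christoffelK φ n a a‖ ^ 2 ∂μ : ℝ) : ℂ)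
      = (christoffelK φ n a a)⁻¹ := by
  have hK := christoffelK_self_ne_zero (n := n) (hdeg 0) a
  have hnorm := integral_christoffelPoly_mul_conj hμT hdeg horth a
    (christoffelPoly_mem_degreeLE (n := n) hdeg a)
  simp only [eval_christoffelPoly, conj_christoffelK_self] at hnorm
  calc _ = ∫ z, (christoffelK φ n a a)⁻¹ * ((christoffelK φ n a a)⁻¹ *
          (christoffelK φ n a z * conj (christoffelK φ n a z))) ∂μ := by
        rw [ofReal_integral_norm_sq]
        congr 1 with z
        rw [map_div₀, conj_christoffelK_self]
        ring
    _ = (christoffelK φ n a a)⁻¹ := by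
        rw [integral_const_mul, integral_const_mul, hnorm, inv_mul_cancel₀ hK, mul_one]

noncomputable def paraOrthoPoly (φ : ℕ → ℂ[X]) (n : ℕ) (w : ℂ) : ℂ[X] :=
  (1 - C (conj w) * X) * christoffelPoly φ n w

@[simp]
theorem eval_paraOrthoPoly (w z : ℂ) : (paraOrthoPoly φ n w).eval z = paraOrtho φ n w z := by
  simp [paraOrthoPoly, paraOrtho]

theorem paraOrthoPoly_ne_zero (h0 : (φ 0).degree = 0) (w : ℂ) : paraOrthoPoly φ n w ≠ 0 := by
  refine mul_ne_zero (fun h => by simpa using congrArg (eval 0) h) fun h => ?_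
  exact christoffelK_self_ne_zero h0 w (by simpa using congrArg (eval w) h)

theorem natDegree_paraOrthoPoly_le (hdeg : ∀ k, (φ k).degree = k) (w : ℂ) :
    (paraOrthoPoly φ n w).natDegree ≤ n + 1 := by
  refine (natDegree_mul_le).trans (add_comm n 1 ▸ Nat.add_le_add ?_ ?_)
  · exact (natDegree_sub_le _ _).trans
      (max_le (by simp) ((natDegree_C_mul_le _ _).trans natDegree_X_le))
  · exact natDegree_le_iff_degree_le.mpr (mem_degreeLE.mp (christoffelPoly_mem_degreeLE hdeg w))

theorem integral_divByMonic_mul_conj_eq_zero (hμT : μ (Metric.sphere (0 : ℂ) 1)ᶜ = 0)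
    (hdeg : ∀ k, (φ k).degree = k)
    (horth : ∀ k m, ∫ z, (φ k).eval z * conj ((φ m).eval z) ∂μ = if k = m then 1 else 0)
    {w ζ : ℂ} (hζ : ζ ∈ Metric.sphere (0 : ℂ) 1) (hB : paraOrtho φ n w ζ = 0)
    {p : ℂ[X]} (hp : p ∈ degreeLE ℂ n) (hpζ : p.eval ζ = 0) :
    ∫ z, (paraOrthoPoly φ n w /ₘ (X - C ζ)).eval z * conj (p.eval z) ∂μ = 0 := by
  set q := paraOrthoPoly φ n w /ₘ (X - C ζ)
  have hq : (X - C ζ) * q = paraOrthoPoly φ n w :=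
    mul_divByMonic_eq_iff_isRoot.mpr (by simpa [IsRoot] using hB)
  set r := p /ₘ (X - C ζ)
  have hr : (X - C ζ) * r = p := mul_divByMonic_eq_iff_isRoot.mpr hpζ
  have hwr : (X - C w) * r ∈ degreeLE ℂ n := by
    rw [mem_degreeLE, degree_mul, degree_X_sub_C, ← degree_X_sub_C ζ, ← degree_mul, hr]
    exact mem_degreeLE.mp hp
  -- On the circle `conj (z - ζ) = - conj z * conj ζ * (z - ζ)`, which trades the factor
  -- `z - ζ` of `p` for the factor `1 - conj w * z` of `B_{n+1}(w, ·) = (X - ζ) q`.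
  have hae : (fun z => q.eval z * conj (p.eval z)) =ᵐ[μ] fun z =>
      -conj ζ * ((christoffelPoly φ n w).eval z * conj (((X - C w) * r).eval z)) := by
    filter_upwards [ae_iff.mpr hμT] with z hz
    have hz1 : z * conj z = 1 := by simp_all [Complex.mul_conj']
    have hζ1 : ζ * conj ζ = 1 := by simp_all [Complex.mul_conj']
    have hqz : q.eval z * (z - ζ) = (1 - conj w * z) * christoffelK φ n w z := by
      simpa [paraOrtho, mul_comm] using congrArg (eval z) hq
    rw [← hr]
    simp only [eval_mul, eval_sub, eval_X, eval_C, map_mul, map_sub, eval_christoffelPoly]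
    linear_combination (-(conj z * conj ζ * conj (r.eval z))) * hqz
      + (q.eval z * conj (r.eval z) * conj ζ
          + christoffelK φ n w z * conj (r.eval z) * conj ζ * conj w) * hz1
      + (-(q.eval z * conj (r.eval z) * conj z)) * hζ1
  rw [integral_congr_ae hae, integral_const_mul,
    integral_christoffelPoly_mul_conj hμT hdeg horth w hwr]
  simp

theorem christoffelK_eq_zero_of_paraOrtho_eq_zero (hμT : μ (Metric.sphere (0 : ℂ) 1)ᶜ = 0)
    (hμinf : ∀ s : Finset ℂ, μ ((s : Set ℂ)ᶜ) ≠ 0) (hdeg : ∀ k, (φ k).degree = k)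
    (horth : ∀ k m, ∫ z, (φ k).eval z * conj ((φ m).eval z) ∂μ = if k = m then 1 else 0)
    {w ζ ζ' : ℂ} (hζ : ζ ∈ Metric.sphere (0 : ℂ) 1) (hB : paraOrtho φ n w ζ = 0)
    (hB' : paraOrtho φ n w ζ' = 0) (hne : ζ' ≠ ζ) :
    christoffelK φ n ζ ζ' = 0 := by
  set q := paraOrthoPoly φ n w /ₘ (X - C ζ)
  have hq : (X - C ζ) * q = paraOrthoPoly φ n w :=
    mul_divByMonic_eq_iff_isRoot.mpr (by simpa [IsRoot] using hB)
  have hq0 : q ≠ 0 := fun h => paraOrthoPoly_ne_zero (hdeg 0) w (by rw [← hq, h, mul_zero])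
  have hq_deg : q ∈ degreeLE ℂ n := by
    refine mem_degreeLE.mpr (degree_le_of_natDegree_le ?_)
    rw [natDegree_divByMonic _ (monic_X_sub_C ζ), natDegree_X_sub_C]
    exact Nat.sub_le_of_le_add (natDegree_paraOrthoPoly_le hdeg w)
  have hqζ' : q.eval ζ' = 0 := by
    simpa [hB', sub_ne_zero.mpr hne] using congrArg (eval ζ') hq
  have hqK := eq_smul_christoffelPoly_of_orthogonal hμT hμinf hdeg horth hq_deg
    fun p hp hpζ => integral_divByMonic_mul_conj_eq_zero hμT hdeg horth hζ hB hp hpζ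
  rw [hqK] at hq0 hqζ'
  simp only [eval_smul, eval_christoffelPoly, smul_eq_mul] at hqζ'
  exact (mul_eq_zero.mp hqζ').resolve_left (left_ne_zero_of_smul hq0)

end Christoffel

theorem sum_sq_norm_ellFun_general
    (μ : Measure ℂ) [IsFiniteMeasure μ]
    (hμT : μ (Metric.sphere (0 : ℂ) 1)ᶜ = 0)
    (hμinf : ∀ s : Finset ℂ, μ ((s : Set ℂ)ᶜ) ≠ 0)
    (φ : ℕ → Polynomial ℂ)
    (hdeg : ∀ k, (φ k).degree = (k : ℕ))
    (horth : ∀ k m, ∫ z, (φ k).eval z * conj ((φ m).eval z) ∂μ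
        = if k = m then 1 else 0)
    (n : ℕ) (w : ℂ)
    (ζ : Fin (n + 1) → ℂ)
    (hζT : ∀ j, ζ j ∈ Metric.sphere (0 : ℂ) 1)
    (hζinj : Function.Injective ζ)
    (hζ0 : ∀ j, paraOrtho φ n w (ζ j) = 0) :
    ∑ j : Fin (n + 1), ∫ z, ‖ellFun φ n ζ j z‖ ^ 2 ∂μ
      = (μ Set.univ).toReal := by
  have hsum := sum_smul_christoffelPoly_eq_one hdeg hζinj fun i j hij =>
    christoffelK_eq_zero_of_paraOrtho_eq_zero hμT hμinf hdeg horth (hζT j) (hζ0 j) (hζ0 i)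
      (hζinj.ne hij)
  apply Complex.ofReal_injective
  calc ((∑ j, ∫ z, ‖ellFun φ n ζ j z‖ ^ 2 ∂μ : ℝ) : ℂ)
      = ∑ j, (christoffelK φ n (ζ j) (ζ j))⁻¹ := by
        push_cast
        exact Finset.sum_congr rfl fun j _ =>
          ofReal_integral_norm_sq_christoffelK_div hμT hdeg horth (ζ j)
    _ = ∑ j, ∫ z, ((christoffelK φ n (ζ j) (ζ j))⁻¹ • christoffelPoly φ n (ζ j)).eval z ∂μ := by
        simp_rw [eval_smul, smul_eq_mul, integral_const_mul,
          integral_eval_christoffelPoly hμT hdeg horth, mul_one]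
    _ = ∫ z, (∑ j, (christoffelK φ n (ζ j) (ζ j))⁻¹ • christoffelPoly φ n (ζ j)).eval z ∂μ := by
        simp_rw [eval_finsetSum]
        exact (integral_finsetSum _ fun j _ => (by fun_prop : Continuous _)
          |>.integrable_of_measure_compl_eq_zero (isCompact_sphere 0 1) hμT).symm
    _ = (μ Set.univ).toReal := by simp [hsum, Measure.real]

/-- The fundamental polynomials satisfy `∑_{j=0}^n ∫_T |ℓ_{jn}|² dμ = μ(T)`. -/
theorem sum_sq_norm_ellFun
    (μ : Measure ℂ) [IsFiniteMeasure μ]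
    (hμT : μ (Metric.sphere (0 : ℂ) 1)ᶜ = 0)
    (hμinf : ∀ s : Finset ℂ, μ ((s : Set ℂ)ᶜ) ≠ 0)
    (φ : ℕ → Polynomial ℂ)
    (hdeg : ∀ k, (φ k).degree = (k : ℕ))
    (hlead : ∀ k, 0 < ((φ k).leadingCoeff).re ∧ ((φ k).leadingCoeff).im = 0)
    (horth : ∀ k m, ∫ z, (φ k).eval z * conj ((φ m).eval z) ∂μ
        = if k = m then 1 else 0)
    (n : ℕ) (w : ℂ) (hw : w ∈ Metric.sphere (0 : ℂ) 1)
    (ζ : Fin (n + 1) → ℂ)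
    (hζT : ∀ j, ζ j ∈ Metric.sphere (0 : ℂ) 1)
    (hζinj : Function.Injective ζ)
    (hζ0 : ∀ j, paraOrtho φ n w (ζ j) = 0) :
    ∑ j : Fin (n + 1), ∫ z, ‖ellFun φ n ζ j z‖ ^ 2 ∂μ
      = (μ Set.univ).toReal :=
  sum_sq_norm_ellFun_general μ hμT hμinf φ hdeg horth n w ζ hζT hζinj hζ0
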